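/- Let S be a negative definite real symmetric s×s matrix with nonnegative off-diagonal entries, let b ∈ ℝˢ be a vector with nonnegative entries, and let d > 0 be a real number. Then the unique solution α ∈ ℝˢ of the linear system S·α = -d·b has all entries nonnegative; moreover, if all entries of b are positive, then all entries of α are positive. -/
import Mathlib


open Matrix

/-- For S negative definite symmetric with nonnegative off-diagonal entries,
b ≥ 0 and d > 0, any solution α of S·α = -d·b has nonnegative entries, and
positive entries if b has positive entries. -/
theorem stmt_1 (s : ℕ) (hs : 1 ≤ s) (S : Matrix (Fin s) (Fin s) ℝ)
    (hsymm : S.IsSymm)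
    (hnegdef : ∀ x : Fin s → ℝ, x ≠ 0 → x ⬝ᵥ S.mulVec x < 0)
    (hoffdiag : ∀ i j : Fin s, i ≠ j → 0 ≤ S i j)
    (b : Fin s → ℝ) (hb : ∀ i, 0 ≤ b i) (d : ℝ) (hd : 0 < d)
    (α : Fin s → ℝ) (hα : S.mulVec α = (-d) • b) :
    (∀ i, 0 ≤ α i) ∧ ((∀ i, 0 < b i) → ∀ i, 0 < α i) := by
  have key : ∀ i, 0 ≤ α i := by
    set y : Fin s → ℝ := fun i => max (-α i) 0 with hy
    set p : Fin s → ℝ := fun i => max (α i) 0 with hp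
    have hyn : ∀ i, 0 ≤ y i := fun i => le_max_right _ _
    have hpn : ∀ i, 0 ≤ p i := fun i => le_max_right _ _
    have hyp : ∀ i, y i * p i = 0 := by
      intro i
      rcases le_or_gt (α i) 0 with h | h
      · have : p i = 0 := max_eq_right h
        rw [this, mul_zero]
      · have : y i = 0 := max_eq_right (by linarith)
        rw [this, zero_mul]
    have hdec : α = p - y := by
      funext i
      simp only [hp, hy, Pi.sub_apply]
      rcases le_or_gt (α i) 0 with h | h
      · rw [max_eq_right h, max_eq_left (by linarith)]; ring
      · rw [max_eq_left h.le, max_eq_right (by linarith)]; ring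
    have h1 : y ⬝ᵥ S.mulVec α = y ⬝ᵥ S.mulVec p - y ⬝ᵥ S.mulVec y := by
      rw [hdec, Matrix.mulVec_sub, dotProduct_sub]
    have h2 : y ⬝ᵥ S.mulVec α ≤ 0 := by
      rw [hα, dotProduct_smul]
      have hyb : 0 ≤ y ⬝ᵥ b :=
        Finset.sum_nonneg fun i _ => mul_nonneg (hyn i) (hb i)
      have : (-d) • (y ⬝ᵥ b) = -(d * (y ⬝ᵥ b)) := by simp [smul_eq_mul]
      rw [this]
      have : 0 ≤ d * (y ⬝ᵥ b) := mul_nonneg hd.le hyb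
      linarith
    have h3 : 0 ≤ y ⬝ᵥ S.mulVec p := by
      apply Finset.sum_nonneg
      intro i _
      rw [Matrix.mulVec, dotProduct, Finset.mul_sum]
      apply Finset.sum_nonneg
      intro j _
      rcases eq_or_ne i j with rfl | hij
      · have : y i * (S i i * p i) = S i i * (y i * p i) := by ring
        rw [this, hyp i, mul_zero]
      · exact mul_nonneg (hyn i) (mul_nonneg (hoffdiag i j hij) (hpn j))
    have h4 : 0 ≤ y ⬝ᵥ S.mulVec y := by linarith
    have hy0 : y = 0 := by
      by_contra h
      exact absurd (hnegdef y h) (not_lt.2 h4)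
    intro i
    have := congrFun hy0 i
    simp only [hy, Pi.zero_apply] at this
    have hle : -α i ≤ 0 := this ▸ le_max_left (-α i) 0
    linarith
  refine ⟨key, ?_⟩
  intro hbpos i
  by_contra hcon
  push_neg at hcon
  have hzero : α i = 0 := le_antisymm hcon (key i)
  have hlt : (S.mulVec α) i < 0 := by
    rw [hα]
    have : ((-d) • b) i = -(d * b i) := by simp [smul_eq_mul]
    rw [this]
    have := mul_pos hd (hbpos i)
    linarith
  have hge : 0 ≤ (S.mulVec α) i := by
    rw [Matrix.mulVec, dotProduct]
    apply Finset.sum_nonneg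
    intro j _
    rcases eq_or_ne j i with rfl | hij
    · rw [hzero, mul_zero]
    · exact mul_nonneg (hoffdiag i j (Ne.symm hij)) (key j)
  linarith
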